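/- arXiv:math/9901037 — 2 statements merged into one kernel-verified Lean document; each statement's English description precedes it below -/
import Mathlib

section
/- With δ̄ as above (last rectangle of R a single column of height μ_L), the change in vacancy numbers under δ̄ is given, for all k ≥ 1 and n ≥ 0, by P^{(k)}_n(ν) − P^{(k)}_n(ν̄) = χ(ℓ̄^{(k−1)} ≤ n < ℓ̄^{(k)}) − χ(ℓ̄^{(k)} ≤ n < ℓ̄^{(k+1)}), where ν̄ is the configuration of δ̄(ν,J), ℓ̄^{(0)} = μ_L, and χ of a true statement is 1 and of a false statement is 0. -/
namespace KSS

/-- A rectangle: `(η, μ)` = (width, height). -/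
abbrev Rect := ℕ × ℕ

/-- Total number of cells of a sequence of rectangles. -/
def sizeR (R : List Rect) : ℕ := (R.map (fun r => r.1 * r.2)).sum

/-- `Q_n(ρ)`: number of cells of the partition `ρ` (a multiset of parts) in the
first `n` columns. -/
def Qn (n : ℕ) (ρ : Multiset ℕ) : ℕ := (ρ.map (fun p => min p n)).sum

/-- `m_n(ρ)`: multiplicity of the part `n` in `ρ`. -/
def mpart (n : ℕ) (ρ : Multiset ℕ) : ℕ := ρ.count n

/-- `ξ^{(k)}(R)`: the partition whose parts are the heights of the rectangles of
`R` of width `k`. -/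
def xiR (R : List Rect) (k : ℕ) : Multiset ℕ :=
  ((R.filter (fun r => r.1 == k)).map Prod.snd : List ℕ)

/-- The vacancy numbers `P^{(k)}_n(ν)` for a configuration `ν` relative to the
rectangle data `R` (convention `ν 0 = ∅`). -/
def vacZ (R : List Rect) (ν : ℕ → Multiset ℕ) (k n : ℕ) : ℤ :=
  (Qn n (ν (k-1)) : ℤ) - 2 * (Qn n (ν k) : ℤ) + (Qn n (ν (k+1)) : ℤ) + (Qn n (xiR R k) : ℤ)

/-- The vacancy number as a natural number. -/
def natVac (R : List Rect) (ν : ℕ → Multiset ℕ) (k n : ℕ) : ℕ := (vacZ R ν k n).toNat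

/-- `Σ_{j>k} λ^t_j = Σ_{p ∈ λ} max(p-k,0)` for a partition `λ` (multiset of parts). -/
def sumTail (lam : Multiset ℕ) (k : ℕ) : ℕ := (lam.map (fun p => p - k)).sum

/-- `λ^t_k`: number of parts of `λ` of size at least `k`. -/
def lamT (lam : Multiset ℕ) (k : ℕ) : ℕ := (lam.filter (fun p => k ≤ p)).card

/-- `ν` is a `(λ^t; R^t)`-configuration:
`|ν^{(k)}| = Σ_{j>k} λ^t_j − Σ_a μ_a max(η_a − k, 0)` for all `k ≥ 1`. -/
def IsConfig (lam : Multiset ℕ) (R : List Rect) (ν : ℕ → Multiset ℕ) : Prop :=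
  ν 0 = 0 ∧ (∀ k, 0 ∉ ν k) ∧
  ∀ k, 1 ≤ k → (ν k).sum + (R.map (fun r => r.2 * (r.1 - k))).sum = sumTail lam k

/-- Admissibility: all vacancy numbers are nonnegative. -/
def Admissible (R : List Rect) (ν : ℕ → Multiset ℕ) : Prop :=
  ∀ k n, 1 ≤ k → 1 ≤ n → 0 ≤ vacZ R ν k n

/-- `J` is a rigging of `ν` relative to `R`: for each `k, n ≥ 1`, `J k n` is the
multiset of labels of the strings of length `n` in the `k`-th rigged partition;
there are `m_n(ν^{(k)})` of them, each between `0` and `P^{(k)}_n(ν)`. -/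
def IsRigging (R : List Rect) (ν : ℕ → Multiset ℕ) (J : ℕ → ℕ → Multiset ℕ) : Prop :=
  (∀ k n, (k = 0 ∨ n = 0) → J k n = 0) ∧
  (∀ k n, 1 ≤ k → 1 ≤ n →
    (J k n).card = mpart n (ν k) ∧ ∀ x ∈ J k n, (x : ℤ) ≤ vacZ R ν k n)

/-- Rigged configuration. -/
def IsRC (lam : Multiset ℕ) (R : List Rect) (ν : ℕ → Multiset ℕ)
    (J : ℕ → ℕ → Multiset ℕ) : Prop :=
  IsConfig lam R ν ∧ Admissible R ν ∧ IsRigging R ν J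

/-- The set `RC(λ^t; R^t)` of rigged configurations. -/
def RCset (lam : Multiset ℕ) (R : List Rect) :
    Set ((ℕ → Multiset ℕ) × (ℕ → ℕ → Multiset ℕ)) :=
  {p | IsRC lam R p.1 p.2}

/-- `α^{(k)}_n`: size of the `n`-th column of `ν^{(k)}`. -/
def alphaC (ν : ℕ → Multiset ℕ) (k n : ℕ) : ℕ := ((ν k).filter (fun p => n ≤ p)).card

/-- `cc(ν) = Σ_{k,n ≥ 1} α^{(k)}_n (α^{(k)}_n − α^{(k+1)}_n)`. -/
noncomputable def ccConf (ν : ℕ → Multiset ℕ) : ℤ :=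
  ∑ᶠ k : ℕ, ∑ᶠ n : ℕ,
    (if 1 ≤ k ∧ 1 ≤ n then
      (alphaC ν k n : ℤ) * ((alphaC ν k n : ℤ) - (alphaC ν (k+1) n : ℤ)) else 0)

/-- `cc(ν,J) = cc(ν) + Σ_{k,n ≥ 1} |J^{(k)}_n|`. -/
noncomputable def ccRC (ν : ℕ → Multiset ℕ) (J : ℕ → ℕ → Multiset ℕ) : ℤ :=
  ccConf ν + ∑ᶠ k : ℕ, ∑ᶠ n : ℕ, ((J k n).sum : ℤ)

/-- There is a singular string of length `n` in the `k`-th rigged partition. -/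
def Singular (R : List Rect) (ν : ℕ → Multiset ℕ) (J : ℕ → ℕ → Multiset ℕ)
    (k n : ℕ) : Prop :=
  1 ≤ n ∧ natVac R ν k n ∈ J k n
def lastRect (R : List Rect) : Rect := (R.getLast?).getD (0,0)

/-- `R̂`: split off the last column of the last rectangle. -/
def Rhat (R : List Rect) : List Rect :=
  if (lastRect R).1 ≤ 1 then R
  else R.dropLast ++ [((lastRect R).1 - 1, (lastRect R).2), (1, (lastRect R).2)]

/-- The configuration of `ĵ(ν,J)`: add a part of size `μ_L` to each of the
first `η_L − 1` partitions. -/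
def jHatNu (R : List Rect) (ν : ℕ → Multiset ℕ) : ℕ → Multiset ℕ := fun k =>
  if 1 ≤ k ∧ k < (lastRect R).1 then ν k + {(lastRect R).2} else ν k

/-- The rigging of `ĵ(ν,J)`: the added strings of length `μ_L` are singular. -/
def jHatJ (R : List Rect) (ν : ℕ → Multiset ℕ) (J : ℕ → ℕ → Multiset ℕ) :
    ℕ → ℕ → Multiset ℕ := fun k n =>
  if 1 ≤ k ∧ k < (lastRect R).1 ∧ n = (lastRect R).2
  then J k n + {natVac (Rhat R) (jHatNu R ν) k n} else J k n
open scoped Classical in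
/-- The lengths `ℓ̄^{(k)}` of the singular strings selected by the algorithm
`δ̄`: `ℓ̄^{(0)} = μ_L`, and `ℓ̄^{(k)}` is the minimal length of a singular string
in the `k`-th rigged partition that is `≥ ℓ̄^{(k−1)}` (`⊤` if none exists). -/
noncomputable def ellBar (R : List Rect) (ν : ℕ → Multiset ℕ)
    (J : ℕ → ℕ → Multiset ℕ) (μL : ℕ) : ℕ → ℕ∞
  | 0 => (μL : ℕ∞)
  | k+1 => sInf {m : ℕ∞ | ∃ n : ℕ, m = (n : ℕ∞) ∧
      ellBar R ν J μL k ≤ (n : ℕ∞) ∧ Singular R ν J (k+1) n}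

/-- `R̄`: remove one cell from the last (single-column) rectangle. -/
def Rbar (R : List Rect) : List Rect :=
  R.dropLast ++ (if (lastRect R).2 ≤ 1 then [] else [(1, (lastRect R).2 - 1)])

open scoped Classical in
/-- The configuration of `δ̄(ν,J)`: each selected singular string is shortened
by one. -/
noncomputable def dbNu (R : List Rect) (ν : ℕ → Multiset ℕ)
    (J : ℕ → ℕ → Multiset ℕ) (μL : ℕ) : ℕ → Multiset ℕ := fun k =>
  if k = 0 then ν k
  else if ellBar R ν J μL k = ⊤ then ν k
  else
    let n := (ellBar R ν J μL k).toNat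
    ((ν k).erase n) + (if n ≤ 1 then 0 else {n - 1})

open scoped Classical in
/-- The rigging of `δ̄(ν,J)`: the shortened strings stay singular, all other
labels are unchanged. -/
noncomputable def dbJ (R : List Rect) (ν : ℕ → Multiset ℕ)
    (J : ℕ → ℕ → Multiset ℕ) (μL : ℕ) : ℕ → ℕ → Multiset ℕ := fun k n =>
  if k = 0 ∨ n = 0 then J k n
  else if ellBar R ν J μL k = (n : ℕ∞) then (J k n).erase (natVac R ν k n)
  else if ellBar R ν J μL k = ((n+1 : ℕ) : ℕ∞) then
    (J k n) + {natVac (Rbar R) (dbNu R ν J μL) k n}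
  else J k n

/-- `δ̄` on pairs. -/
noncomputable def dbPair (R : List Rect) (μL : ℕ)
    (p : (ℕ → Multiset ℕ) × (ℕ → ℕ → Multiset ℕ)) :
    (ℕ → Multiset ℕ) × (ℕ → ℕ → Multiset ℕ) :=
  (dbNu R p.1 p.2 μL, dbJ R p.1 p.2 μL)


open scoped Classical in
lemma Qn_add (n : ℕ) (ρ σ : Multiset ℕ) : Qn n (ρ + σ) = Qn n ρ + Qn n σ := by
  simp [Qn]

lemma Qn_cons (n a : ℕ) (s : Multiset ℕ) : Qn n (a ::ₘ s) = min a n + Qn n s := by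
  simp [Qn]

lemma ellBar_succ (R : List Rect) (ν : ℕ → Multiset ℕ) (J : ℕ → ℕ → Multiset ℕ)
    (μL k : ℕ) :
    ellBar R ν J μL (k+1) = sInf {m : ℕ∞ | ∃ n : ℕ, m = (n : ℕ∞) ∧
      ellBar R ν J μL k ≤ (n : ℕ∞) ∧ Singular R ν J (k+1) n} := rfl

lemma ellBar_mono (R : List Rect) (ν : ℕ → Multiset ℕ) (J : ℕ → ℕ → Multiset ℕ)
    (μL k : ℕ) : ellBar R ν J μL k ≤ ellBar R ν J μL (k+1) := by
  rw [ellBar_succ]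
  refine le_sInf ?_
  rintro m ⟨n, rfl, h1, h2⟩
  exact h1

lemma ellBar_spec (R : List Rect) (ν : ℕ → Multiset ℕ) (J : ℕ → ℕ → Multiset ℕ)
    (μL k ℓ : ℕ) (h : ellBar R ν J μL (k+1) = (ℓ : ℕ∞)) :
    ellBar R ν J μL k ≤ (ℓ : ℕ∞) ∧ Singular R ν J (k+1) ℓ := by
  classical
  rw [ellBar_succ] at h
  set S : Set ℕ∞ := {m : ℕ∞ | ∃ n : ℕ, m = (n : ℕ∞) ∧
      ellBar R ν J μL k ≤ (n : ℕ∞) ∧ Singular R ν J (k+1) n} with hS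
  have hne : S.Nonempty := by
    by_contra hE
    rw [Set.not_nonempty_iff_eq_empty] at hE
    rw [hE, sInf_empty] at h
    exact (WithTop.coe_ne_top (a := ℓ)) h.symm
  have hmem : sInf S ∈ S := csInf_mem hne
  rw [h] at hmem
  obtain ⟨n, hn, h1, h2⟩ := hmem
  have : ℓ = n := by exact_mod_cast hn
  subst this
  exact ⟨h1, h2⟩

lemma dbNu_diff (lam : Multiset ℕ) (R : List Rect) (μL : ℕ)
    (ν : ℕ → Multiset ℕ) (J : ℕ → ℕ → Multiset ℕ) (hRC : IsRC lam R ν J)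
    (k n : ℕ) (hk : 1 ≤ k) :
    (Qn n (ν k) : ℤ) - Qn n (dbNu R ν J μL k) =
      if ellBar R ν J μL k ≤ (n : ℕ∞) then 1 else 0 := by
  classical
  have hk0 : k ≠ 0 := by omega
  by_cases htop : ellBar R ν J μL k = ⊤
  · rw [if_neg (by simp [htop])]
    simp [dbNu, hk0, htop]
  · obtain ⟨ℓ, hℓ⟩ := Option.ne_none_iff_exists.mp htop
    have hℓ' : ellBar R ν J μL k = (ℓ : ℕ∞) := hℓ.symm
    obtain ⟨k', rfl⟩ : ∃ k', k = k' + 1 := ⟨k - 1, by omega⟩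
    obtain ⟨hge, hℓ1, hsing⟩ := ellBar_spec R ν J μL k' ℓ hℓ'
    have hcard : (J (k'+1) ℓ).card = mpart ℓ (ν (k'+1)) :=
      (hRC.2.2.2 (k'+1) ℓ hk hℓ1).1
    have hJne : (J (k'+1) ℓ) ≠ 0 := by
      intro h0; rw [h0] at hsing; exact absurd hsing (Multiset.notMem_zero _)
    have hmem : ℓ ∈ ν (k'+1) := by
      rw [← Multiset.count_pos, ← mpart, ← hcard]
      exact Multiset.card_pos.mpr hJne
    have hdb : dbNu R ν J μL (k'+1) =
        ((ν (k'+1)).erase ℓ) + (if ℓ ≤ 1 then 0 else {ℓ - 1}) := by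
      simp [dbNu, hℓ']
    have hQ : Qn n (ν (k'+1)) = min ℓ n + Qn n ((ν (k'+1)).erase ℓ) := by
      conv_lhs => rw [← Multiset.cons_erase hmem]
      exact Qn_cons n ℓ _
    rw [hdb, Qn_add, hQ, hℓ']
    have hcoe : ((ℓ : ℕ∞) ≤ (n : ℕ∞)) ↔ ℓ ≤ n := by exact_mod_cast Iff.rfl
    by_cases hln : ℓ ≤ n
    · rw [if_pos (hcoe.mpr hln)]
      by_cases h1 : ℓ ≤ 1
      · have : ℓ = 1 := le_antisymm h1 hℓ1
        subst this
        simp [Qn]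
        omega
      · rw [if_neg h1]
        have : Qn n {ℓ - 1} = min (ℓ-1) n := by simp [Qn]
        rw [this]
        push_cast
        omega
    · rw [if_neg (fun hc => hln (hcoe.mp hc))]
      by_cases h1 : ℓ ≤ 1
      · rw [if_pos h1]
        simp [Qn]
        omega
      · rw [if_neg h1]
        have : Qn n {ℓ - 1} = min (ℓ-1) n := by simp [Qn]
        rw [this]
        push_cast
        omega

lemma xiR_append (l l' : List Rect) (k : ℕ) :
    xiR (l ++ l') k = xiR l k + xiR l' k := by
  simp [xiR]

lemma xiR_diff (R : List Rect) (μL : ℕ) (hR : R ≠ []) (hlast : lastRect R = (1, μL))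
    (hμ : 1 ≤ μL) (k n : ℕ) :
    (Qn n (xiR R k) : ℤ) - Qn n (xiR (Rbar R) k) =
      if k = 1 ∧ μL ≤ n then 1 else 0 := by
  have hlast' : lastRect R = R.getLast hR := by
    simp [lastRect, List.getLast?_eq_getLast hR]
  have hRsplit : R = R.dropLast ++ [(1, μL)] := by
    conv_lhs => rw [← List.dropLast_append_getLast hR]
    rw [← hlast', hlast]
  have hRbar : Rbar R = R.dropLast ++ (if μL ≤ 1 then [] else [(1, μL - 1)]) := by
    simp [Rbar, hlast]
  have hone : xiR [((1:ℕ), μL)] k = if k = 1 then ({μL} : Multiset ℕ) else 0 := by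
    by_cases hk : k = 1 <;> simp [xiR, hk] <;> omega
  have hone' : xiR (if μL ≤ 1 then ([] : List Rect) else [(1, μL - 1)]) k =
      if k = 1 ∧ ¬ μL ≤ 1 then ({μL - 1} : Multiset ℕ) else 0 := by
    by_cases h1' : μL ≤ 1 <;> by_cases hk : k = 1 <;> simp [xiR, h1', hk] <;> omega
  have hx : xiR R k = xiR R.dropLast k + xiR [((1:ℕ), μL)] k := by
    conv_lhs => rw [hRsplit]
    rw [xiR_append]
  have hxb : xiR (Rbar R) k = xiR R.dropLast k +
      xiR (if μL ≤ 1 then ([] : List Rect) else [(1, μL - 1)]) k := by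
    rw [hRbar, xiR_append]
  rw [hx, hxb, hone, hone', Qn_add, Qn_add]
  by_cases hk : k = 1 <;> by_cases h1' : μL ≤ 1 <;>
    simp [hk, h1', Qn] <;> push_cast <;> split_ifs <;> omega

lemma chi_alg (a b c : ℕ∞) (n : ℕ) (hab : a ≤ b) (hbc : b ≤ c) :
    (if a ≤ (n:ℕ∞) then (1:ℤ) else 0) - 2 * (if b ≤ (n:ℕ∞) then 1 else 0)
      + (if c ≤ (n:ℕ∞) then 1 else 0)
    = (if a ≤ (n:ℕ∞) ∧ (n:ℕ∞) < b then 1 else 0)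
      - (if b ≤ (n:ℕ∞) ∧ (n:ℕ∞) < c then 1 else 0) := by
  by_cases hA : a ≤ (n:ℕ∞) <;> by_cases hB : b ≤ (n:ℕ∞) <;> by_cases hC : c ≤ (n:ℕ∞) <;>
    simp [hA, hB, hC, lt_iff_not_ge]
  all_goals first
    | exact hA (hab.trans hB)
    | exact hB (hbc.trans hC)

open scoped Classical in
/-- change of vacancy numbers under `δ̄`: if the last
rectangle of `R` is a single column of height `μ_L` and
`(ν,J) ∈ RC(λ^t;R^t)`, then for all `k ≥ 1` and `n ≥ 0`,
`P^{(k)}_n(ν) − P^{(k)}_n(ν̄)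
  = χ(ℓ̄^{(k−1)} ≤ n < ℓ̄^{(k)}) − χ(ℓ̄^{(k)} ≤ n < ℓ̄^{(k+1)})`. -/
theorem statement11 (lam : Multiset ℕ) (R : List Rect) (μL : ℕ)
    (hlam : 0 ∉ lam) (hsize : lam.sum = sizeR R)
    (hR : R ≠ []) (hlast : lastRect R = (1, μL)) (hμ : 1 ≤ μL)
    (ν : ℕ → Multiset ℕ) (J : ℕ → ℕ → Multiset ℕ) (hRC : IsRC lam R ν J) :
    ∀ k n, 1 ≤ k →
      vacZ R ν k n - vacZ (Rbar R) (dbNu R ν J μL) k n =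
        (if ellBar R ν J μL (k-1) ≤ (n : ℕ∞) ∧ (n : ℕ∞) < ellBar R ν J μL k
          then 1 else 0)
        - (if ellBar R ν J μL k ≤ (n : ℕ∞) ∧ (n : ℕ∞) < ellBar R ν J μL (k+1)
          then 1 else 0) := by
  intro k n hk
  have hk0 : k ≠ 0 := by omega
  have hDk := dbNu_diff lam R μL ν J hRC k n hk
  have hDk1 := dbNu_diff lam R μL ν J hRC (k+1) n (by omega)
  have hX := xiR_diff R μL hR hlast hμ k n
  have key : vacZ R ν k n - vacZ (Rbar R) (dbNu R ν J μL) k n =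
      ((Qn n (ν (k-1)) : ℤ) - Qn n (dbNu R ν J μL (k-1)))
      - 2 * ((Qn n (ν k) : ℤ) - Qn n (dbNu R ν J μL k))
      + ((Qn n (ν (k+1)) : ℤ) - Qn n (dbNu R ν J μL (k+1)))
      + ((Qn n (xiR R k) : ℤ) - Qn n (xiR (Rbar R) k)) := by
    simp only [vacZ]; ring
  have hab : ellBar R ν J μL (k-1) ≤ ellBar R ν J μL k := by
    have := ellBar_mono R ν J μL (k-1)
    rwa [Nat.sub_add_cancel hk] at this
  have hbc : ellBar R ν J μL k ≤ ellBar R ν J μL (k+1) := ellBar_mono R ν J μL k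
  rw [key, hDk, hDk1, hX, ← chi_alg _ _ _ n hab hbc]
  by_cases hk1 : k = 1
  · subst hk1
    have h0 : dbNu R ν J μL 0 = ν 0 := by simp [dbNu]
    rw [show (1:ℕ) - 1 = 0 from rfl, h0, sub_self]
    have e1 : (if ((1:ℕ) = 1 ∧ μL ≤ n) then (1:ℤ) else 0) = if μL ≤ n then 1 else 0 := by
      simp
    have e2 : (if ellBar R ν J μL 0 ≤ (n:ℕ∞) then (1:ℤ) else 0)
        = if μL ≤ n then 1 else 0 := by
      have h : ellBar R ν J μL 0 = (μL : ℕ∞) := rfl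
      rw [h]
      by_cases hn : μL ≤ n
      · rw [if_pos (by exact_mod_cast hn), if_pos hn]
      · rw [if_neg (fun hc => hn (by exact_mod_cast hc)), if_neg hn]
    rw [e1, e2]
    ring
  · have hk2 : 1 ≤ k - 1 := by omega
    have hDkm := dbNu_diff lam R μL ν J hRC (k-1) n hk2
    rw [hDkm, if_neg (show ¬(k = 1 ∧ μL ≤ n) from fun hc => hk1 hc.1)]
    ring

end KSS
end

section
/- Let ν be an admissible (λ^t;R^t)-configuration and ν^t its RC-transpose (defined via the matrix transposition m^t_{ij} = −m_{ji} + χ((i,j)∈λ) − Σ_a χ((i,j)∈R_a)). Then for all k, n ≥ 1: if m_n(ν^{(k)}) > 0 then P^{(k)}_n(ν) = m_k(ν^{t(n)}), and if m_k(ν^{t(n)}) > 0 then P^{(n)}_k(ν^t) = m_n(ν^{(k)}). Consequently, there cannot simultaneously exist a singular string of length n in the k-th rigged partition of a rigged configuration and a singular string of length k in the n-th rigged partition of its RC-transpose. -/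
namespace KSS

/-- Membership of the cell `(i,j)` (row `i ≥ 1`, column `j ≥ 1`) in the Ferrers
diagram of the partition `λ` (a multiset of parts). -/
def memCell (lam : Multiset ℕ) (i j : ℕ) : Prop :=
  1 ≤ i ∧ 1 ≤ j ∧ i ≤ (lam.filter (fun p => j ≤ p)).card

/-- The matrix `m_{ij} = α^{(i−1)}_j − α^{(i)}_j` associated to a configuration. -/
def mMat (ν : ℕ → Multiset ℕ) (i j : ℕ) : ℤ := (alphaC ν (i-1) j : ℤ) - (alphaC ν i j : ℤ)

open scoped Classical in
/-- The RC-transpose of a configuration matrix: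
`m^t_{ij} = −m_{ji} + χ((i,j) ∈ λ) − Σ_a χ((i,j) ∈ R_a)`. -/
noncomputable def trMat (lam : Multiset ℕ) (R : List Rect) (m : ℕ → ℕ → ℤ)
    (i j : ℕ) : ℤ :=
  -(m j i) + (if memCell lam i j then 1 else 0)
    - ((R.map (fun r => if 1 ≤ i ∧ i ≤ r.2 ∧ 1 ≤ j ∧ j ≤ r.1 then (1:ℤ) else 0)).sum)

/-- The transpose (conjugate) of a partition given as a multiset of parts. -/
def conjM (lam : Multiset ℕ) : Multiset ℕ :=
  (↑(((List.range' 1 lam.sum).map (fun j => (lam.filter (fun p => j ≤ p)).card)).filter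
      (fun c => decide (0 < c))) : Multiset ℕ)

/-- number of parts of `ρ` that are `≥ n`. -/
def aC (ρ : Multiset ℕ) (n : ℕ) : ℕ := (ρ.filter (fun p => n ≤ p)).card

/-- cells beyond column n -/
def Ae (n : ℕ) (ρ : Multiset ℕ) : ℕ := (ρ.map (fun p => p - n)).sum

lemma aC_split (ρ : Multiset ℕ) (n : ℕ) : aC ρ n = ρ.count n + aC ρ (n+1) := by
  induction ρ using Multiset.induction_on with
  | empty => simp [aC]
  | cons a s ih =>
    simp only [aC, Multiset.filter_cons, Multiset.card_add, Multiset.count_cons] at *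
    split_ifs <;> simp_all <;> omega

lemma aC_anti (ρ : Multiset ℕ) {j j' : ℕ} (h : j ≤ j') : aC ρ j' ≤ aC ρ j := by
  induction ρ using Multiset.induction_on with
  | empty => simp [aC]
  | cons a s ih =>
    simp only [aC, Multiset.filter_cons, Multiset.card_add] at *
    split_ifs <;> simp_all <;> omega

lemma Qn_zero (ρ : Multiset ℕ) : Qn 0 ρ = 0 := by simp [Qn]

lemma Qn_succ (n : ℕ) (ρ : Multiset ℕ) : Qn (n+1) ρ = Qn n ρ + aC ρ (n+1) := by
  induction ρ using Multiset.induction_on with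
  | empty => simp [Qn, aC]
  | cons a s ih =>
    simp only [Qn, aC, Multiset.map_cons, Multiset.sum_cons, Multiset.filter_cons,
      Multiset.card_add] at *
    split_ifs <;> simp_all <;> omega

lemma Qn_eq_sum (n : ℕ) (ρ : Multiset ℕ) : Qn n ρ = ∑ j ∈ Finset.Icc 1 n, aC ρ j := by
  induction n with
  | zero => simp [Qn_zero]
  | succ n ih => rw [Finset.sum_Icc_succ_top (by omega), ← ih, Qn_succ]

lemma Qn_add_Ae (n : ℕ) (ρ : Multiset ℕ) : Qn n ρ + Ae n ρ = ρ.sum := by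
  induction ρ using Multiset.induction_on with
  | empty => simp [Qn, Ae]
  | cons a s ih =>
    simp only [Qn, Ae, Multiset.map_cons, Multiset.sum_cons] at *
    omega

lemma Ae_eq_zero (n : ℕ) (ρ : Multiset ℕ) (h : ∀ p ∈ ρ, p ≤ n) : Ae n ρ = 0 := by
  rw [Ae, Multiset.sum_eq_zero]
  intro x hx
  obtain ⟨p, hp, rfl⟩ := Multiset.mem_map.mp hx
  exact Nat.sub_eq_zero_of_le (h p hp)

lemma le_of_Ae_eq_zero {n : ℕ} {ρ : Multiset ℕ} (h : Ae n ρ = 0) {p : ℕ} (hp : p ∈ ρ) :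
    p ≤ n := by
  have := Multiset.sum_eq_zero_iff.mp h (p - n) (Multiset.mem_map_of_mem _ hp)
  omega

lemma filter_Icc_card (n c : ℕ) : ((Finset.Icc 1 n).filter (fun i => i ≤ c)).card = min n c := by
  have : (Finset.Icc 1 n).filter (fun i => i ≤ c) = Finset.Icc 1 (min n c) := by
    ext i; simp; omega
  rw [this, Nat.card_Icc]; omega

lemma sum_ite_min (n c : ℕ) : ∑ i ∈ Finset.Icc 1 n, (if i ≤ c then (1:ℤ) else 0) = min n c := by
  rw [Finset.sum_boole, filter_Icc_card]

lemma list_sum_swap (R : List Rect) (s : Finset ℕ) (f : ℕ → Rect → ℤ) :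
    ∑ i ∈ s, (R.map (f i)).sum = (R.map (fun r => ∑ i ∈ s, f i r)).sum := by
  induction R with
  | nil => simp
  | cons r R ih => simp [Finset.sum_add_distrib, ih]

lemma sum_Icc_telescope (k : ℕ) (f : ℕ → ℤ) :
    ∑ j ∈ Finset.Icc 1 k, (f (j-1) - f j) = f 0 - f k := by
  induction k with
  | zero => simp
  | succ k ih => rw [Finset.sum_Icc_succ_top (by omega), ih]; simp


def TRz (R : List Rect) (n j : ℕ) : ℤ :=
  (R.map (fun r => if j ≤ r.1 then ((min n r.2 : ℕ) : ℤ) else 0)).sum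

lemma lamT_eq (lam : Multiset ℕ) (j : ℕ) : lamT lam j = aC lam j := rfl

lemma Qn_coe_list (n : ℕ) (l : List ℕ) : Qn n (↑l) = (l.map (fun p => min p n)).sum := by
  simp [Qn]

lemma xiR_cast (R : List Rect) (k n : ℕ) :
    ((Qn n (xiR R k) : ℕ) : ℤ) = (R.map (fun r => if r.1 = k then ((min r.2 n : ℕ) : ℤ) else 0)).sum := by
  induction R with
  | nil => simp [xiR, Qn]
  | cons r R ih =>
    by_cases h : r.1 = k <;>
      simp [xiR, List.filter_cons, h, Qn] at ih ⊢ <;> push_cast at ih ⊢ <;> omega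

lemma TR_sub (R : List Rect) (n k : ℕ) :
    TRz R n k - TRz R n (k+1) = ((Qn n (xiR R k) : ℕ) : ℤ) := by
  rw [xiR_cast]
  induction R with
  | nil => simp [TRz]
  | cons r R ih =>
    simp only [TRz, List.map_cons, List.sum_cons] at ih ⊢
    have hmc : min r.2 n = min n r.2 := min_comm _ _
    by_cases h1 : r.1 = k
    · rw [if_pos h1, if_pos (by omega : k ≤ r.1), if_neg (by omega : ¬ k + 1 ≤ r.1)]
      rw [hmc]; linarith [ih]
    · rw [if_neg h1]
      by_cases h2 : k ≤ r.1
      · rw [if_pos h2, if_pos (by omega : k + 1 ≤ r.1)]; linarith [ih]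
      · rw [if_neg h2, if_neg (by omega : ¬ k + 1 ≤ r.1)]; linarith [ih]

lemma TR_secdiff (R : List Rect) (n j : ℕ) (hn : 1 ≤ n) :
    TRz R (n-1) j - 2 * TRz R n j + TRz R (n+1) j
      = -(R.map (fun r => if j ≤ r.1 ∧ r.2 = n then (1:ℤ) else 0)).sum := by
  induction R with
  | nil => simp [TRz]
  | cons r R ih =>
    simp only [TRz, List.map_cons, List.sum_cons] at ih ⊢
    by_cases h1 : j ≤ r.1
    · have hite : (if j ≤ r.1 ∧ r.2 = n then (1:ℤ) else 0) = if r.2 = n then (1:ℤ) else 0 := by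
        simp [h1]
      have hh : ((min (n-1) r.2 : ℕ) : ℤ) - 2*((min n r.2 : ℕ) : ℤ) + ((min (n+1) r.2 : ℕ) : ℤ)
          = -(if r.2 = n then (1:ℤ) else 0) := by
        by_cases h2 : r.2 = n
        · rw [if_pos h2]; omega
        · rw [if_neg h2]; omega
      simp only [if_pos h1, hite]
      linarith [ih, hh]
    · have hite : (if j ≤ r.1 ∧ r.2 = n then (1:ℤ) else 0) = 0 := by simp [h1]
      simp only [if_neg h1, hite]
      linarith [ih]

lemma rect_secdiff (R : List Rect) (k : ℕ) :
    ((R.map (fun r => r.2 * (r.1 - k))).sum : ℤ) - 2 * ((R.map (fun r => r.2 * (r.1 - (k+1)))).sum : ℤ)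
      + ((R.map (fun r => r.2 * (r.1 - (k+2)))).sum : ℤ) = ((xiR R (k+1)).sum : ℤ) := by
  induction R with
  | nil => simp [xiR]
  | cons r R ih =>
    have hxi : ((xiR (r :: R) (k+1)).sum : ℤ)
        = (if r.1 = k + 1 then (r.2 : ℤ) else 0) + ((xiR R (k+1)).sum : ℤ) := by
      by_cases h : r.1 = k + 1 <;> simp [xiR, List.filter_cons, h]
    rw [hxi]
    simp only [List.map_cons, List.sum_cons, Nat.cast_add, Nat.cast_mul]
    by_cases h : r.1 = k + 1
    · rw [if_pos h]
      have e1 : r.1 - k = 1 := by omega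
      have e2 : r.1 - (k+1) = 0 := by omega
      have e3 : r.1 - (k+2) = 0 := by omega
      rw [e1, e2, e3]
      simp only [Nat.cast_one, Nat.cast_zero]
      linarith [ih]
    · rw [if_neg h]
      have e : ((r.1 - k : ℕ) : ℤ) + ((r.1 - (k+2) : ℕ) : ℤ) = 2 * ((r.1 - (k+1) : ℕ) : ℤ) := by
        omega
      linear_combination ih + (r.2 : ℤ) * e

lemma sumTail_secdiff (lam : Multiset ℕ) (hlam : 0 ∉ lam) (k : ℕ) :
    ((sumTail lam k : ℕ) : ℤ) - 2 * ((sumTail lam (k+1) : ℕ) : ℤ) + ((sumTail lam (k+2) : ℕ) : ℤ)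
      = (lam.count (k+1) : ℤ) := by
  induction lam using Multiset.induction_on with
  | empty => simp [sumTail]
  | cons a s ih =>
    have ha : a ≠ 0 := by intro h; exact hlam (h ▸ Multiset.mem_cons_self a s)
    have hs : 0 ∉ s := fun h => hlam (Multiset.mem_cons_of_mem h)
    have := ih hs
    simp only [sumTail, Multiset.map_cons, Multiset.sum_cons, Multiset.count_cons] at this ⊢
    by_cases h : a = k + 1
    · subst h
      rw [if_pos rfl]
      push_cast at this ⊢
      omega
    · rw [if_neg (by omega : ¬ k + 1 = a)]
      push_cast at this ⊢
      omega

lemma Icc_sum_pop (a M : ℕ) (f : ℕ → ℤ) (hf : ∀ j, M < j → f j = 0) :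
    ∑ j ∈ Finset.Icc a M, f j = f a + ∑ j ∈ Finset.Icc (a+1) M, f j := by
  by_cases h : a ≤ M
  · rw [Finset.Icc_eq_cons_Ioc h, Finset.sum_cons, Finset.Icc_add_one_left_eq_Ioc]
  · rw [Finset.Icc_eq_empty (by omega), Finset.Icc_eq_empty (by omega), hf a (by omega)]
    simp


def Dfun (lam : Multiset ℕ) (ν : ℕ → Multiset ℕ) (M k n : ℕ) : ℤ :=
  (∑ j ∈ Finset.Icc (k+1) M, ((lamT lam j - n : ℕ) : ℤ)) - (Ae n (ν k) : ℤ)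

/-- for an admissible configuration `ν` with RC-transpose
`ν^t` (determined by the transposed matrix), if `m_n(ν^{(k)}) > 0` then
`P^{(k)}_n(ν) = m_k(ν^{t(n)})`, and if `m_k(ν^{t(n)}) > 0` then
`P^{(n)}_k(ν^t) = m_n(ν^{(k)})`.  Consequently there cannot simultaneously be
a singular string of length `n` in the `k`-th rigged partition of `(ν,J)` and
a singular string of length `k` in the `n`-th rigged partition of its
RC-transpose. -/
theorem statement18 (lam : Multiset ℕ) (R : List Rect)
    (ν : ℕ → Multiset ℕ) (J : ℕ → ℕ → Multiset ℕ)
    (hlam : 0 ∉ lam) (hsize : lam.sum = sizeR R)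
    (hsub : ∀ r ∈ R, r.2 ≤ lamT lam r.1)
    (hRC : IsRC lam R ν J)
    (νt : ℕ → Multiset ℕ) (Jt : ℕ → ℕ → Multiset ℕ)
    (hνt0 : νt 0 = 0) (hνtpos : ∀ n, 0 ∉ νt n)
    (hαt : ∀ n j, 1 ≤ n → 1 ≤ j →
      (alphaC νt n j : ℤ) = - ∑ i ∈ Finset.Icc 1 n, trMat lam R (mMat ν) i j)
    (hJt : ∀ n k, 1 ≤ n → 1 ≤ k →
      Jt n k = conjM ((J k n).map (fun x => natVac R ν k n - x))) :
    (∀ k n, 1 ≤ k → 1 ≤ n →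
      (0 < mpart n (ν k) → vacZ R ν k n = (mpart k (νt n) : ℤ)) ∧
      (0 < mpart k (νt n) → vacZ (R.map Prod.swap) νt n k = (mpart n (ν k) : ℤ))) ∧
    (∀ k n, 1 ≤ k → 1 ≤ n →
      ¬ (Singular R ν J k n ∧ Singular (R.map Prod.swap) νt Jt n k)) := by
  classical
  obtain ⟨⟨hν0, hνpos, hconf⟩, hadm, hrig⟩ := hRC
  have hKF : ∀ n j, 1 ≤ j → ((aC (νt n) j : ℕ) : ℤ)
      = (Qn n (ν (j-1)) : ℤ) - (Qn n (ν j) : ℤ) - ((min n (lamT lam j) : ℕ) : ℤ) + TRz R n j := by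
    intro n j hj
    rcases Nat.eq_zero_or_pos n with rfl | hn
    · have hTR0 : TRz R 0 j = 0 := by
        simp [TRz]
      simp [aC, hνt0, Qn, hTR0]
    · have h := hαt n j hn hj
      have halpha : alphaC νt n j = aC (νt n) j := rfl
      rw [halpha] at h
      rw [h]
      have hA : ∑ i ∈ Finset.Icc 1 n, mMat ν j i = (Qn n (ν (j-1)) : ℤ) - (Qn n (ν j) : ℤ) := by
        simp only [mMat]
        rw [Finset.sum_sub_distrib]
        have e1 : ((Qn n (ν (j-1)) : ℕ) : ℤ) = ∑ i ∈ Finset.Icc 1 n, (alphaC ν (j-1) i : ℤ) := by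
          rw [Qn_eq_sum]; push_cast; rfl
        have e2 : ((Qn n (ν j) : ℕ) : ℤ) = ∑ i ∈ Finset.Icc 1 n, (alphaC ν j i : ℤ) := by
          rw [Qn_eq_sum]; push_cast; rfl
        rw [e1, e2]
      have hcell : ∀ i ∈ Finset.Icc 1 n, (if memCell lam i j then (1:ℤ) else 0)
          = if i ≤ lamT lam j then (1:ℤ) else 0 := by
        intro i hi
        rcases Finset.mem_Icc.mp hi with ⟨h1, _⟩
        by_cases hc : i ≤ lamT lam j
        · rw [if_pos hc]; exact if_pos ⟨h1, hj, hc⟩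
        · rw [if_neg hc]
          exact if_neg (fun hcc => hc (show 1 ≤ i ∧ 1 ≤ j ∧ i ≤ lamT lam j from hcc).2.2)
      have hB : ∑ i ∈ Finset.Icc 1 n, (if memCell lam i j then (1:ℤ) else 0)
          = ((min n (lamT lam j) : ℕ) : ℤ) := by
        rw [Finset.sum_congr rfl hcell, sum_ite_min]
      have hC : ∑ i ∈ Finset.Icc 1 n,
            (R.map (fun r => if 1 ≤ i ∧ i ≤ r.2 ∧ 1 ≤ j ∧ j ≤ r.1 then (1:ℤ) else 0)).sum
          = TRz R n j := by
        have hptr : ∀ r : Rect,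
            (∑ i ∈ Finset.Icc 1 n, if 1 ≤ i ∧ i ≤ r.2 ∧ 1 ≤ j ∧ j ≤ r.1 then (1:ℤ) else 0)
              = if j ≤ r.1 then ((min n r.2 : ℕ) : ℤ) else 0 := by
          intro r
          by_cases hr : j ≤ r.1
          · rw [if_pos hr, ← sum_ite_min n r.2]
            apply Finset.sum_congr rfl
            intro i hi
            rcases Finset.mem_Icc.mp hi with ⟨h1, _⟩
            by_cases hle : i ≤ r.2
            · rw [if_pos hle]; exact if_pos ⟨h1, hle, hj, hr⟩
            · rw [if_neg hle]; exact if_neg (fun hh => hle hh.2.1)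
          · rw [if_neg hr]
            exact Finset.sum_eq_zero fun i _ => if_neg fun hh => hr hh.2.2.2
        rw [list_sum_swap]
        unfold TRz
        rw [show (fun r : Rect => ∑ i ∈ Finset.Icc 1 n,
              if 1 ≤ i ∧ i ≤ r.2 ∧ 1 ≤ j ∧ j ≤ r.1 then (1:ℤ) else 0)
            = fun r : Rect => if j ≤ r.1 then ((min n r.2 : ℕ) : ℤ) else 0 from funext hptr]
      have hsum : ∑ i ∈ Finset.Icc 1 n, trMat lam R (mMat ν) i j
          = -((Qn n (ν (j-1)) : ℤ) - (Qn n (ν j) : ℤ)) + ((min n (lamT lam j) : ℕ) : ℤ)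
            - TRz R n j := by
        simp only [trMat]
        rw [Finset.sum_sub_distrib, Finset.sum_add_distrib, Finset.sum_neg_distrib, hA, hB, hC]
      rw [hsum]; ring
  have hstar : ∀ n k, ((νt n).count (k+1) : ℤ)
      = vacZ R ν (k+1) n
        - (((min n (lamT lam (k+1)) : ℕ) : ℤ) - ((min n (lamT lam (k+2)) : ℕ) : ℤ)) := by
    intro n k
    have h1 := hKF n (k+1) (by omega)
    have h2 := hKF n (k+2) (by omega)
    have hc : ((aC (νt n) (k+1) : ℕ) : ℤ)
        = ((νt n).count (k+1) : ℤ) + ((aC (νt n) (k+2) : ℕ) : ℤ) := by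
      exact_mod_cast aC_split (νt n) (k+1)
    have hTR := TR_sub R n (k+1)
    have e1 : k + 1 - 1 = k := by omega
    have e2 : k + 2 - 1 = k + 1 := by omega
    rw [e1] at h1
    rw [e2] at h2
    simp only [vacZ, e1]
    linarith [h1, h2, hc, hTR]
  have hQT : ∀ m k, (Qn k (νt m) : ℤ)
      = -(Qn m (ν k) : ℤ) - (∑ j ∈ Finset.Icc 1 k, ((min m (lamT lam j) : ℕ) : ℤ))
        + ∑ j ∈ Finset.Icc 1 k, TRz R m j := by
    intro m k
    have hq : (Qn k (νt m) : ℤ) = ∑ j ∈ Finset.Icc 1 k, ((aC (νt m) j : ℕ) : ℤ) := by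
      rw [Qn_eq_sum]; push_cast; rfl
    rw [hq]
    have hsp : ∀ j ∈ Finset.Icc 1 k, ((aC (νt m) j : ℕ) : ℤ)
        = ((Qn m (ν (j-1)) : ℤ) - (Qn m (ν j) : ℤ))
          + (-(((min m (lamT lam j) : ℕ) : ℤ)) + TRz R m j) := by
      intro j hj
      have := hKF m j (Finset.mem_Icc.mp hj).1
      linarith [this]
    rw [Finset.sum_congr rfl hsp, Finset.sum_add_distrib, Finset.sum_add_distrib,
      Finset.sum_neg_distrib, sum_Icc_telescope k (fun j => (Qn m (ν j) : ℤ))]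
    have h0 : (Qn m (ν 0) : ℤ) = 0 := by rw [hν0]; simp [Qn]
    rw [h0]; ring
  have htstar : ∀ n k, 1 ≤ n → vacZ (R.map Prod.swap) νt n k
      = ((ν k).count n : ℤ)
        + (((Finset.Icc 1 k).filter (fun j => lamT lam j = n)).card : ℤ) := by
    intro n k hn
    have e1 : n - 1 + 1 = n := by omega
    have hq1 := hQT (n-1) k
    have hq2 := hQT n k
    have hq3 := hQT (n+1) k
    have hp1 : (Qn (n-1) (ν k) : ℤ) - 2*(Qn n (ν k) : ℤ) + (Qn (n+1) (ν k) : ℤ)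
        = -(((ν k).count n : ℤ)) := by
      have a1 := Qn_succ (n-1) (ν k)
      rw [e1] at a1
      have a2 := Qn_succ n (ν k)
      have a3 := aC_split (ν k) n
      omega
    have hp2 : (∑ j ∈ Finset.Icc 1 k, ((min (n-1) (lamT lam j) : ℕ) : ℤ))
        - 2 * (∑ j ∈ Finset.Icc 1 k, ((min n (lamT lam j) : ℕ) : ℤ))
        + (∑ j ∈ Finset.Icc 1 k, ((min (n+1) (lamT lam j) : ℕ) : ℤ))
        = -((((Finset.Icc 1 k).filter (fun j => lamT lam j = n)).card : ℕ) : ℤ) := by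
      have hL : ∑ j ∈ Finset.Icc 1 k,
            (((min (n-1) (lamT lam j) : ℕ) : ℤ) - 2*((min n (lamT lam j) : ℕ) : ℤ)
              + ((min (n+1) (lamT lam j) : ℕ) : ℤ))
          = (∑ j ∈ Finset.Icc 1 k, ((min (n-1) (lamT lam j) : ℕ) : ℤ))
            - 2 * (∑ j ∈ Finset.Icc 1 k, ((min n (lamT lam j) : ℕ) : ℤ))
            + (∑ j ∈ Finset.Icc 1 k, ((min (n+1) (lamT lam j) : ℕ) : ℤ)) := by
        rw [Finset.sum_add_distrib, Finset.sum_sub_distrib, Finset.mul_sum]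
      rw [← hL]
      have hpt : ∀ j ∈ Finset.Icc 1 k,
          (((min (n-1) (lamT lam j) : ℕ) : ℤ) - 2*((min n (lamT lam j) : ℕ) : ℤ)
              + ((min (n+1) (lamT lam j) : ℕ) : ℤ))
            = -(if lamT lam j = n then (1:ℤ) else 0) := by
        intro j _
        by_cases hc : lamT lam j = n
        · rw [if_pos hc]; omega
        · rw [if_neg hc]; omega
      rw [Finset.sum_congr rfl hpt, Finset.sum_neg_distrib, Finset.sum_boole]
    have hp3 : (∑ j ∈ Finset.Icc 1 k, TRz R (n-1) j) - 2*(∑ j ∈ Finset.Icc 1 k, TRz R n j)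
        + (∑ j ∈ Finset.Icc 1 k, TRz R (n+1) j)
        = -((Qn k (xiR (R.map Prod.swap) n) : ℕ) : ℤ) := by
      have hL : ∑ j ∈ Finset.Icc 1 k, (TRz R (n-1) j - 2*TRz R n j + TRz R (n+1) j)
          = (∑ j ∈ Finset.Icc 1 k, TRz R (n-1) j) - 2*(∑ j ∈ Finset.Icc 1 k, TRz R n j)
            + (∑ j ∈ Finset.Icc 1 k, TRz R (n+1) j) := by
        rw [Finset.sum_add_distrib, Finset.sum_sub_distrib, Finset.mul_sum]
      rw [← hL, Finset.sum_congr rfl (fun j _ => TR_secdiff R n j hn), Finset.sum_neg_distrib,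
        list_sum_swap]
      have hxi : ((Qn k (xiR (R.map Prod.swap) n) : ℕ) : ℤ)
          = (R.map (fun r => if r.2 = n then ((min r.1 k : ℕ) : ℤ) else 0)).sum := by
        rw [xiR_cast (R.map Prod.swap) n k, List.map_map]
        rfl
      rw [hxi]
      have hmapeq : ∀ r ∈ R, (∑ i ∈ Finset.Icc 1 k, if i ≤ r.1 ∧ r.2 = n then (1:ℤ) else 0)
          = (if r.2 = n then ((min r.1 k : ℕ) : ℤ) else 0) := by
        intro r _
        by_cases hc : r.2 = n
        · have hcg : ∀ i ∈ Finset.Icc 1 k, (if i ≤ r.1 ∧ r.2 = n then (1:ℤ) else 0)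
              = if i ≤ r.1 then (1:ℤ) else 0 := by
            intro i _
            by_cases hj : i ≤ r.1
            · rw [if_pos hj]; exact if_pos ⟨hj, hc⟩
            · rw [if_neg hj]; exact if_neg (fun hh => hj hh.1)
          rw [Finset.sum_congr rfl hcg, sum_ite_min, if_pos hc]
          omega
        · rw [if_neg hc]
          exact Finset.sum_eq_zero fun i _ => if_neg (fun hh => hc hh.2)
      rw [List.map_congr_left hmapeq]
    simp only [vacZ]
    rw [hq1, hq2, hq3]
    linarith [hp1, hp2, hp3]
  have hABr : ∀ k n, vacZ R ν (k+1) n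
      = (lam.count (k+1) : ℤ) - (Ae n (ν k) : ℤ) + 2 * (Ae n (ν (k+1)) : ℤ)
        - (Ae n (ν (k+2)) : ℤ) - (Ae n (xiR R (k+1)) : ℤ) := by
    intro k n
    have hq : ∀ ρ : Multiset ℕ, (Qn n ρ : ℤ) = (ρ.sum : ℤ) - (Ae n ρ : ℤ) := by
      intro ρ; have := Qn_add_Ae n ρ; omega
    have hS : ∀ j, ((ν j).sum : ℤ)
        = ((sumTail lam j : ℕ) : ℤ) - ((R.map (fun r => r.2 * (r.1 - j))).sum : ℤ) := by
      intro j
      rcases Nat.eq_zero_or_pos j with rfl | hj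
      · rw [hν0]
        have h1 : sumTail lam 0 = lam.sum := by simp [sumTail]
        have h2 : (R.map (fun r => r.2 * (r.1 - 0))).sum = sizeR R := by
          simp [sizeR, Nat.mul_comm]
        rw [h1, h2, hsize]; simp
      · have := hconf j hj; omega
    have hst := sumTail_secdiff lam hlam k
    have hrs := rect_secdiff R k
    have e1 : k + 1 - 1 = k := by omega
    simp only [vacZ, e1]
    rw [hq, hq, hq, hq, hS k, hS (k+1), hS (k+2)]
    linarith [hst, hrs]
  set M := lam.sum + 1 with hM
  have hltM : ∀ j, M ≤ j → lamT lam j = 0 := by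
    intro j hj
    rw [lamT_eq, aC, Multiset.card_eq_zero, Multiset.filter_eq_nil]
    intro p hp hle
    have := Multiset.le_sum_of_mem hp
    omega
  have hνM : ∀ j, M ≤ j → ν j = 0 := by
    intro j hj
    have hc := hconf j (by omega)
    have hst0 : sumTail lam j = 0 := by
      rw [sumTail]; apply Multiset.sum_eq_zero
      intro x hx
      obtain ⟨p, hp, rfl⟩ := Multiset.mem_map.mp hx
      have := Multiset.le_sum_of_mem hp
      omega
    have hsum0 : (ν j).sum = 0 := by omega
    apply Multiset.eq_zero_of_forall_notMem
    intro x hxmem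
    have hx0 : x = 0 := Multiset.sum_eq_zero_iff.mp hsum0 x hxmem
    exact absurd (hx0 ▸ hxmem) (hνpos j)
  have hDzero : ∀ k n, M ≤ k → Dfun lam ν M k n = 0 := by
    intro k n hk
    unfold Dfun
    rw [hνM k hk, Finset.Icc_eq_empty (by omega)]
    simp [Ae]
  have hsecd : ∀ n k, 2 * Dfun lam ν M (k+1) n ≤ Dfun lam ν M k n + Dfun lam ν M (k+2) n := by
    intro n k
    have hf0 : ∀ j, M < j → ((lamT lam j - n : ℕ) : ℤ) = 0 := by
      intro j hj; rw [hltM j (by omega)]; simp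
    have hpop1 := Icc_sum_pop (k+1) M (fun j => ((lamT lam j - n : ℕ) : ℤ)) hf0
    have hpop2 := Icc_sum_pop (k+2) M (fun j => ((lamT lam j - n : ℕ) : ℤ)) hf0
    have habr := hABr k n
    have hge : 0 ≤ vacZ R ν (k+1) n
        - (((min n (lamT lam (k+1)) : ℕ) : ℤ) - ((min n (lamT lam (k+2)) : ℕ) : ℤ)) := by
      rw [← hstar n k]; exact Int.natCast_nonneg _
    have hsplit : lamT lam (k+1) = lam.count (k+1) + lamT lam (k+2) := by
      rw [lamT_eq, lamT_eq]; exact aC_split lam (k+1)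
    have hAξ : (0:ℤ) ≤ (Ae n (xiR R (k+1)) : ℤ) := Int.natCast_nonneg _
    have harith : ((lamT lam (k+1) - n : ℕ) : ℤ) - ((lamT lam (k+2) - n : ℕ) : ℤ)
        - (lam.count (k+1) : ℤ)
        + (((min n (lamT lam (k+1)) : ℕ) : ℤ) - ((min n (lamT lam (k+2)) : ℕ) : ℤ)) = 0 := by
      omega
    unfold Dfun
    have e2 : k + 1 + 1 = k + 2 := by omega
    have e3 : k + 2 + 1 = k + 3 := by omega
    rw [e2, hpop1, hpop2, e3]
    linarith [hge, habr, hAξ, harith]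
  have hanti : ∀ n m k, M ≤ k + m → Dfun lam ν M (k+1) n ≤ Dfun lam ν M k n := by
    intro n m
    induction m with
    | zero => intro k hk; rw [hDzero k n (by omega), hDzero (k+1) n (by omega)]
    | succ m ih => intro k hk; linarith [hsecd n k, ih (k+1) (by omega)]
  have hDpos : ∀ n m k, M ≤ k + m → 0 ≤ Dfun lam ν M k n := by
    intro n m
    induction m with
    | zero => intro k hk; rw [hDzero k n (by omega)]
    | succ m ih => intro k hk; linarith [hanti n (m+1) k (by omega), ih (k+1) (by omega)]
  have hML : ∀ k p, p ∈ ν (k+1) → p ≤ lamT lam (k+2) := by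
    intro k p hp
    have h0 := hDpos (lamT lam (k+2)) M (k+1) (by omega)
    unfold Dfun at h0
    have hz : ∑ j ∈ Finset.Icc (k+1+1) M, ((lamT lam j - lamT lam (k+2) : ℕ) : ℤ) = 0 := by
      apply Finset.sum_eq_zero
      intro j hj
      have hmem := Finset.mem_Icc.mp hj
      have hle : lamT lam j ≤ lamT lam (k+2) := by
        rw [lamT_eq, lamT_eq]; exact aC_anti lam (by omega)
      have hz2 : lamT lam j - lamT lam (k+2) = 0 := by omega
      rw [hz2]; simp
    rw [hz] at h0
    have hA0 : Ae (lamT lam (k+2)) (ν (k+1)) = 0 := by omega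
    exact le_of_Ae_eq_zero hA0 hp
  constructor
  · intro k n hk hn
    obtain ⟨k, rfl⟩ : ∃ m, k = m + 1 := ⟨k - 1, by omega⟩
    constructor
    · intro hm
      have hmem : n ∈ ν (k+1) := Multiset.count_pos.mp hm
      have hb : n ≤ lamT lam (k+2) := hML k n hmem
      have hb2 : n ≤ lamT lam (k+1) := le_trans hb (by
        rw [lamT_eq, lamT_eq]; exact aC_anti lam (by omega))
      have h1 : min n (lamT lam (k+1)) = n := min_eq_left hb2
      have h2 : min n (lamT lam (k+2)) = n := min_eq_left hb
      have hst := hstar n k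
      rw [h1, h2] at hst
      have hg : (mpart (k+1) (νt n) : ℤ) = ((νt n).count (k+1) : ℤ) := rfl
      rw [hg, hst]; ring
    · intro hm
      have hpos : (0:ℤ) < vacZ R ν (k+1) n
          - (((min n (lamT lam (k+1)) : ℕ) : ℤ) - ((min n (lamT lam (k+2)) : ℕ) : ℤ)) := by
        rw [← hstar n k]; exact_mod_cast hm
      have hD0 : ((Finset.Icc 1 (k+1)).filter (fun j => lamT lam j = n)).card = 0 := by
        by_contra hne
        obtain ⟨j, hj⟩ := Finset.card_pos.mp (Nat.pos_of_ne_zero hne)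
        obtain ⟨hjIcc, hjeq⟩ := Finset.mem_filter.mp hj
        have hjk := (Finset.mem_Icc.mp hjIcc).2
        have hlek : lamT lam (k+1) ≤ n := by
          rw [← hjeq, lamT_eq, lamT_eq]; exact aC_anti lam hjk
        have hlek2 : lamT lam (k+2) ≤ n := le_trans (by
          rw [lamT_eq, lamT_eq]; exact aC_anti lam (by omega)) hlek
        have hA1 : Ae n (ν (k+1)) = 0 :=
          Ae_eq_zero _ _ (fun p hp => le_trans (hML k p hp) hlek2)
        have habr := hABr k n
        rw [hA1] at habr
        have hsplitZ : (lamT lam (k+1) : ℤ) = (lam.count (k+1) : ℤ) + (lamT lam (k+2) : ℤ) := by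
          have h := aC_split lam (k+1)
          rw [lamT_eq, lamT_eq]
          exact_mod_cast h
        have m1 : min n (lamT lam (k+1)) = lamT lam (k+1) := min_eq_right hlek
        have m2 : min n (lamT lam (k+2)) = lamT lam (k+2) := min_eq_right hlek2
        rw [m1, m2] at hpos
        simp only [Nat.cast_zero] at habr
        linarith [habr, hpos, hsplitZ, Int.natCast_nonneg (Ae n (ν k)),
          Int.natCast_nonneg (Ae n (ν (k+2))), Int.natCast_nonneg (Ae n (xiR R (k+1)))]
      have ht := htstar n (k+1) hn
      rw [hD0] at ht
      simp only [Nat.cast_zero, add_zero] at ht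
      exact ht
  · intro k n hk hn
    rintro ⟨⟨-, hs1⟩, ⟨-, hs2⟩⟩
    have hcard := (hrig.2 k n hk hn).1
    have hmem : natVac R ν k n ∈ J k n := hs1
    have hm1 : 0 < (J k n).card := by
      rw [Multiset.card_pos]
      intro h0
      rw [h0] at hmem
      exact absurd hmem (Multiset.notMem_zero _)
    have ht := htstar n k hn
    have hvge : ((J k n).card : ℤ) ≤ vacZ (R.map Prod.swap) νt n k := by
      rw [ht]
      have hcc : ((J k n).card : ℤ) = ((ν k).count n : ℤ) := by exact_mod_cast hcard
      rw [hcc]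
      linarith [Int.natCast_nonneg (((Finset.Icc 1 k).filter (fun j => lamT lam j = n)).card)]
    have hnatle : (J k n).card ≤ natVac (R.map Prod.swap) νt n k := by
      rw [natVac]
      exact (Int.le_toNat (le_trans (by exact_mod_cast Nat.zero_le _) hvge)).mpr hvge
    have hJteq := hJt n k hn hk
    rw [hJteq] at hs2
    have h0C : (0:ℕ) ∈ (J k n).map (fun x => natVac R ν k n - x) := by
      have := Multiset.mem_map_of_mem (fun x => natVac R ν k n - x) hmem
      simpa using this
    obtain ⟨C', hC'⟩ := Multiset.exists_cons_of_mem h0C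
    rw [conjM, Multiset.mem_coe, List.mem_filter] at hs2
    obtain ⟨hmm, -⟩ := hs2
    obtain ⟨j, hjr, hjeq⟩ := List.mem_map.mp hmm
    have hj1 : 1 ≤ j := (List.mem_range'_1.mp hjr).1
    have hle : (((J k n).map (fun x => natVac R ν k n - x)).filter (fun p => j ≤ p)).card
        ≤ C'.card := by
      rw [hC', Multiset.filter_cons_of_neg _ (by omega)]
      exact Multiset.card_le_card (Multiset.filter_le _ _)
    have hcC : ((J k n).map (fun x => natVac R ν k n - x)).card = (J k n).card :=
      Multiset.card_map _ _
    have hcC' : C'.card + 1 = (J k n).card := by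
      rw [hC'] at hcC
      simpa using hcC
    omega


end KSS
end
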